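/- Let q₀ ∈ ℝ and define the coherent-q₀ density matrix coefficients ρ_{j,k} = e^{−q₀²/2} (q₀/√2)^{j+k} / √(j! k!) for j, k ∈ ℕ. Then for every φ ∈ ℝ and x ∈ ℝ, the double series ∑_{j ≥ 0} ∑_{k ≥ 0} ρ_{j,k} ψ_j(x) ψ_k(x) e^{−i(k−j)φ} converges absolutely and equals exp(−(x − q₀ cos φ)²)/√π. -/

import Mathlib

/-- The physicists' Hermite polynomial `H_k(x) = (−1)^k e^{x²} (d^k/dx^k) e^{−x²}`. -/
noncomputable def hermiteP (k : ℕ) (x : ℝ) : ℝ :=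
  (-1 : ℝ) ^ k * Real.exp (x ^ 2) * iteratedDeriv k (fun y => Real.exp (-y ^ 2)) x

/-- The `k`-th Fock function `ψ_k(x) = (√π 2^k k!)^{−1/2} H_k(x) e^{−x²/2}`. -/
noncomputable def fock (k : ℕ) (x : ℝ) : ℝ :=
  (Real.sqrt (Real.sqrt Real.pi * 2 ^ k * Nat.factorial k))⁻¹ * hermiteP k x *
    Real.exp (-x ^ 2 / 2)

/-- The density matrix coefficients of the coherent-`q₀` state:
`ρ_{j,k} = e^{−q₀²/2} (q₀/√2)^{j+k} / √(j! k!)`. -/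
noncomputable def coherentCoeff (q₀ : ℝ) (j k : ℕ) : ℝ :=
  Real.exp (-q₀ ^ 2 / 2) * (q₀ / Real.sqrt 2) ^ (j + k) /
    Real.sqrt ((Nat.factorial j : ℝ) * (Nat.factorial k : ℝ))

/-!
Since `(-1)ⁿ Hₙ(z) e^{-z²}` is the `n`-th derivative of the entire function `e^{-w²}`, its Taylor
expansion at `z`, evaluated at `z - t`, gives the generating function
`∑ Hₙ(z) tⁿ / n! = e^{2zt - t²}` for all complex `t`; being a power series in `t` convergent everywhere, it converges absolutely.
The term `ρ_{j,k} ψ_j(x) ψ_k(x) e^{-i(k-j)φ}` factors as `e^{-q₀²/2} conj(a_j) a_k`, where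
`a_k = π^{-1/4} e^{-x²/2} H_k(x) t^k / k!` with `t = (q₀/2) e^{-iφ}`. So the double series converges
absolutely to `e^{-q₀²/2} |π^{-1/4} e^{-x²/2} e^{2xt - t²}|²`, and completing the square in the
exponent gives the Gaussian.
-/

open Polynomial Real ComplexConjugate

noncomputable def physHermite : ℕ → ℤ[X]
  | 0 => 1
  | n + 1 => 2 * X * physHermite n - derivative (physHermite n)

theorem iteratedDeriv_eq_physHermite_mul {𝕜 : Type*} [NontriviallyNormedField 𝕜] {E : 𝕜 → 𝕜}
    (hE : ∀ z, HasDerivAt E (E z * -(2 * z)) z) (n : ℕ) (z : 𝕜) :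
    iteratedDeriv n E z = (-1) ^ n * aeval z (physHermite n) * E z := by
  induction n generalizing z with
  | zero => simp [physHermite]
  | succ n ih =>
    have h : HasDerivAt (fun y => (-1) ^ n * aeval y (physHermite n) * E y) _ z :=
      (((physHermite n).hasDerivAt_aeval z).const_mul _).mul (hE z)
    rw [iteratedDeriv_succ, funext ih, h.deriv]
    simp only [physHermite, map_sub, map_mul, aeval_X, map_ofNat, pow_succ]
    ring

theorem Real.hasDerivAt_exp_neg_sq (x : ℝ) :
    HasDerivAt (fun y => Real.exp (-y ^ 2)) (Real.exp (-x ^ 2) * -(2 * x)) x := by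
  simpa using ((hasDerivAt_pow 2 x).neg).exp

theorem Complex.hasDerivAt_exp_neg_sq (z : ℂ) :
    HasDerivAt (fun w => Complex.exp (-w ^ 2)) (Complex.exp (-z ^ 2) * -(2 * z)) z := by
  simpa using ((hasDerivAt_pow 2 z).neg).cexp

theorem hermiteP_eq_aeval_physHermite (k : ℕ) (x : ℝ) :
    hermiteP k x = aeval x (physHermite k) := by
  have hexp : Real.exp (x ^ 2) * Real.exp (-x ^ 2) = 1 := by rw [← Real.exp_add]; simp
  rw [hermiteP, iteratedDeriv_eq_physHermite_mul Real.hasDerivAt_exp_neg_sq]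
  calc (-1) ^ k * Real.exp (x ^ 2) * ((-1) ^ k * aeval x (physHermite k) * Real.exp (-x ^ 2))
      = ((-1) ^ k * (-1) ^ k) * (Real.exp (x ^ 2) * Real.exp (-x ^ 2)) *
          aeval x (physHermite k) := by ring
    _ = aeval x (physHermite k) := by rw [← mul_pow, hexp]; norm_num

theorem hasSum_physHermite_mul_pow_div_factorial (z t : ℂ) :
    HasSum (fun n => aeval z (physHermite n) * t ^ n / n.factorial)
      (Complex.exp (2 * z * t - t ^ 2)) := by
  have htaylor := (Complex.hasSum_taylorSeries_of_entire
    (fun w => (Complex.hasDerivAt_exp_neg_sq w).differentiableAt) z (z - t)).mul_right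
      (Complex.exp (z ^ 2))
  have hexp : Complex.exp (-z ^ 2) * Complex.exp (z ^ 2) = 1 := by rw [← Complex.exp_add]; simp
  rw [show 2 * z * t - t ^ 2 = -(z - t) ^ 2 + z ^ 2 by ring, Complex.exp_add]
  refine htaylor.congr_fun fun n => ?_
  rw [iteratedDeriv_eq_physHermite_mul Complex.hasDerivAt_exp_neg_sq, smul_eq_mul, smul_eq_mul]
  calc aeval z (physHermite n) * t ^ n / n.factorial
      = (n.factorial : ℂ)⁻¹ * ((-1) * (z - t - z)) ^ n *
          (Complex.exp (-z ^ 2) * Complex.exp (z ^ 2)) * aeval z (physHermite n) := by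
        rw [hexp]; ring
    _ = _ := by rw [mul_pow]; ring

theorem summable_norm_mul_pow_of_summable_mul_pow {𝕜 : Type*} [NormedField 𝕜] {a : ℕ → 𝕜}
    {r t : 𝕜} (ha : Summable fun n => a n * r ^ n) (htr : ‖t‖ < ‖r‖) :
    Summable fun n => ‖a n * t ^ n‖ := by
  have hr : 0 < ‖r‖ := (norm_nonneg t).trans_lt htr
  obtain ⟨M, hM⟩ := ha.tendsto_atTop_zero.norm.bddAbove_range
  refine .of_nonneg_of_le (fun n => norm_nonneg _) (fun n => ?_)
    ((summable_geometric_of_lt_one (by positivity) ((div_lt_one hr).2 htr)).mul_left M)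
  calc ‖a n * t ^ n‖ = ‖a n * r ^ n‖ * (‖t‖ / ‖r‖) ^ n := by
        rw [norm_mul, norm_mul, norm_pow, norm_pow, div_pow]; field_simp
    _ ≤ M * (‖t‖ / ‖r‖) ^ n := by gcongr; exact hM ⟨n, rfl⟩

theorem summable_norm_physHermite_mul_pow_div_factorial (z t : ℂ) :
    Summable fun n => ‖aeval z (physHermite n) * t ^ n / (n.factorial : ℂ)‖ := by
  have hr : ‖t‖ < ‖((‖t‖ + 1 : ℝ) : ℂ)‖ := by
    rw [Complex.norm_real, Real.norm_of_nonneg (by positivity)]; linarith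
  have hsum := (hasSum_physHermite_mul_pow_div_factorial z (‖t‖ + 1 : ℝ)).summable
  simpa only [div_mul_eq_mul_div] using summable_norm_mul_pow_of_summable_mul_pow
    (a := fun n => aeval z (physHermite n) / n.factorial)
    (by simpa only [div_mul_eq_mul_div] using hsum) hr

theorem pow_div_sqrt_factorial_mul_fock (q x : ℝ) (n : ℕ) :
    (q / √2) ^ n / √(n.factorial : ℝ) * fock n x =
      (√(√π))⁻¹ * Real.exp (-x ^ 2 / 2) *
        (aeval x (physHermite n) * (q / 2) ^ n / n.factorial) := by
  have hsqrt : √(√π * 2 ^ n * n.factorial) = √(√π) * √2 ^ n * √(n.factorial : ℝ) := by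
    have h2 : √((2 : ℝ) ^ n) = √2 ^ n := by
      rw [Real.sqrt_eq_iff_eq_sq (by positivity) (by positivity), ← pow_mul', pow_mul,
        Real.sq_sqrt zero_le_two]
    rw [Real.sqrt_mul (by positivity), Real.sqrt_mul (by positivity), h2]
  rw [fock, hermiteP_eq_aeval_physHermite, hsqrt, div_pow, div_pow]
  field_simp
  rw [← pow_mul', pow_mul, Real.sq_sqrt zero_le_two, Real.sq_sqrt (Nat.cast_nonneg _)]
  ring

noncomputable def coherentAmp (q₀ φ x : ℝ) (k : ℕ) : ℂ :=
  (((q₀ / √2) ^ k / √(k.factorial : ℝ) * fock k x : ℝ) : ℂ) *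
    Complex.exp (-(Complex.I * k * φ))

noncomputable def coherentWave (q₀ φ x : ℝ) : ℂ :=
  (((√(√π))⁻¹ * Real.exp (-x ^ 2 / 2) : ℝ) : ℂ) *
    Complex.exp (2 * x * ((q₀ / 2 : ℝ) * Complex.exp (-(Complex.I * φ))) -
      ((q₀ / 2 : ℝ) * Complex.exp (-(Complex.I * φ))) ^ 2)

section Coherent

variable (q₀ φ x : ℝ)

theorem coherentAmp_eq (k : ℕ) :
    coherentAmp q₀ φ x k = (((√(√π))⁻¹ * Real.exp (-x ^ 2 / 2) : ℝ) : ℂ) *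
      (aeval (x : ℂ) (physHermite k) * ((q₀ / 2 : ℝ) * Complex.exp (-(Complex.I * φ))) ^ k /
        k.factorial) := by
  have hexp : Complex.exp (-(Complex.I * k * φ)) = Complex.exp (-(Complex.I * φ)) ^ k := by
    rw [← Complex.exp_nat_mul]; ring_nf
  rw [coherentAmp, pow_div_sqrt_factorial_mul_fock, hexp, ← Complex.coe_algebraMap,
    aeval_algebraMap_apply, Complex.coe_algebraMap]
  push_cast
  ring

theorem hasSum_coherentAmp : HasSum (coherentAmp q₀ φ x) (coherentWave q₀ φ x) := by
  rw [show coherentAmp q₀ φ x = _ from funext (coherentAmp_eq q₀ φ x)]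
  exact (hasSum_physHermite_mul_pow_div_factorial _ _).mul_left _

theorem summable_norm_coherentAmp : Summable fun k => ‖coherentAmp q₀ φ x k‖ := by
  simpa only [coherentAmp_eq, norm_mul] using
    (summable_norm_physHermite_mul_pow_div_factorial _ _).mul_left _

theorem ofReal_coherentCoeff_mul_fock_mul_fock_mul_exp (j k : ℕ) :
    ((coherentCoeff q₀ j k * fock j x * fock k x : ℝ) : ℂ) *
        Complex.exp (-Complex.I * (((k : ℝ) - (j : ℝ) : ℝ) : ℂ) * (φ : ℂ)) =
      (Real.exp (-q₀ ^ 2 / 2) : ℂ) * (conj (coherentAmp q₀ φ x j) * coherentAmp q₀ φ x k) := by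
  have hexp : Complex.exp (-Complex.I * (((k : ℝ) - (j : ℝ) : ℝ) : ℂ) * (φ : ℂ)) =
      conj (Complex.exp (-(Complex.I * j * φ))) * Complex.exp (-(Complex.I * k * φ)) := by
    rw [← Complex.exp_conj, ← Complex.exp_add]
    congr 1
    simp only [map_neg, map_mul, Complex.conj_I, Complex.conj_natCast, Complex.conj_ofReal]
    push_cast
    ring
  rw [hexp, coherentAmp, coherentAmp, map_mul, Complex.conj_ofReal, coherentCoeff, pow_add,
    Real.sqrt_mul (Nat.cast_nonneg _)]
  push_cast
  rw [← div_mul_div_comm]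
  ring

theorem exp_mul_norm_coherentWave_sq :
    Real.exp (-q₀ ^ 2 / 2) * ‖coherentWave q₀ φ x‖ ^ 2 =
      Real.exp (-(x - q₀ * Real.cos φ) ^ 2) / √π := by
  have hre : (2 * x * ((q₀ / 2 : ℝ) * Complex.exp (-(Complex.I * φ))) -
      ((q₀ / 2 : ℝ) * Complex.exp (-(Complex.I * φ))) ^ 2).re =
        x * q₀ * Real.cos φ - q₀ ^ 2 / 4 * (Real.cos φ ^ 2 - Real.sin φ ^ 2) := by
    simp only [Complex.ofReal_div, Complex.ofReal_ofNat, pow_two, Complex.sub_re, Complex.mul_re,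
      Complex.re_ofNat, Complex.ofReal_re, Complex.im_ofNat, Complex.ofReal_im, mul_zero, sub_zero,
      Complex.div_ofNat_re, Complex.exp_re, Complex.neg_re, Complex.I_re, zero_mul, Complex.I_im,
      sub_self, neg_zero, Real.exp_zero, Complex.neg_im, Complex.mul_im, one_mul, zero_add,
      Real.cos_neg, Complex.div_ofNat_im, zero_div, Complex.exp_im, Real.sin_neg, mul_neg,
      add_zero, neg_mul, neg_neg]
    ring
  have hexponent : -(x - q₀ * Real.cos φ) ^ 2 = -q₀ ^ 2 / 2 + 2 * (-x ^ 2 / 2) +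
      2 * (x * q₀ * Real.cos φ - q₀ ^ 2 / 4 * (Real.cos φ ^ 2 - Real.sin φ ^ 2)) := by
    rw [Real.sin_sq]; ring
  rw [coherentWave, norm_mul, Complex.norm_real, Complex.norm_exp, hre,
    Real.norm_of_nonneg (by positivity), mul_pow, mul_pow, inv_pow,
    Real.sq_sqrt (Real.sqrt_nonneg _), ← Real.exp_nat_mul, ← Real.exp_nat_mul, hexponent,
    Real.exp_add, Real.exp_add]
  push_cast
  ring

end Coherent

/-- For the coherent-`q₀` state, the double series
`∑_{j,k} ρ_{j,k} ψ_j(x) ψ_k(x) e^{−i(k−j)φ}` converges absolutely and equals the density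
`exp(−(x − q₀ cos φ)²)/√π`. -/
theorem coherent_density (q₀ : ℝ) (φ x : ℝ) :
    Summable (fun p : ℕ × ℕ =>
      ‖((coherentCoeff q₀ p.1 p.2 * fock p.1 x * fock p.2 x : ℝ) : ℂ) *
        Complex.exp (-Complex.I * (((p.2 : ℝ) - (p.1 : ℝ) : ℝ) : ℂ) * (φ : ℂ))‖) ∧
    ∑' p : ℕ × ℕ,
      ((coherentCoeff q₀ p.1 p.2 * fock p.1 x * fock p.2 x : ℝ) : ℂ) *
        Complex.exp (-Complex.I * (((p.2 : ℝ) - (p.1 : ℝ) : ℝ) : ℂ) * (φ : ℂ))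
      = ((Real.exp (-(x - q₀ * Real.cos φ) ^ 2) / Real.sqrt Real.pi : ℝ) : ℂ) := by
  have hnorm := summable_norm_coherentAmp q₀ φ x
  have hnorm_conj : Summable fun k => ‖conj (coherentAmp q₀ φ x k)‖ := by
    simpa only [Complex.norm_conj] using hnorm
  have hsummable := summable_mul_of_summable_norm hnorm_conj hnorm
  have hprod := HasSum.mul (Complex.hasSum_conj'.mpr (hasSum_coherentAmp q₀ φ x))
    (hasSum_coherentAmp q₀ φ x) hsummable
  simp only [ofReal_coherentCoeff_mul_fock_mul_fock_mul_exp]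
  refine ⟨((hnorm_conj.mul_norm hnorm).mul_left _).congr fun p => (norm_mul _ _).symm, ?_⟩
  rw [(hprod.mul_left _).tsum_eq, Complex.conj_mul', ← exp_mul_norm_coherentWave_sq]
  norm_cast
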